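/- Let V be a finite set, h a binary preference function on V, and σ_opt a ranking of V minimizing the pairwise disagreement L(h,σ) = C(n,2)⁻¹ Σ_{u≠v} h(u,v)σ(v,u) over all rankings σ. Then E_s[L(h, QuickSort_s(V,h))] ≤ 3·L(h, σ_opt). -/

import Mathlib

variable {V : Type*} [DecidableEq V]

/-- QuickSort on a list using a (possibly non-transitive) preference function:
the head is the pivot, elements preferred to the pivot go left.  Running it on
a uniformly random permutation of the input is equivalent to uniformly random
pivot selection. -/
def qsort (h : V → V → Bool) : List V → List V
  | [] => []
  | x :: xs =>
      qsort h (xs.filter (fun y => h y x)) ++ x :: qsort h (xs.filter (fun y => !(h y x)))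
  termination_by l => l.length
  decreasing_by
    · simp only [List.length_cons, List.length_unattach]; exact Nat.lt_succ_of_le ((List.length_filter_le _ _).trans_eq List.length_attach)
    · simp only [List.length_cons, List.length_unattach]; exact Nat.lt_succ_of_le ((List.length_filter_le _ _).trans_eq List.length_attach)

/-- The unordered pairs compared directly (pivot vs. element of its call). -/
def directPairs (h : V → V → Bool) : List V → List (Finset V)
  | [] => []
  | x :: xs =>
      xs.map (fun y => ({x, y} : Finset V)) ++
      (directPairs h (xs.filter (fun y => h y x)) ++
        directPairs h (xs.filter (fun y => !(h y x))))
  termination_by l => l.length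
  decreasing_by
    · simp only [List.length_cons, List.length_unattach]; exact Nat.lt_succ_of_le ((List.length_filter_le _ _).trans_eq List.length_attach)
    · simp only [List.length_cons, List.length_unattach]; exact Nat.lt_succ_of_le ((List.length_filter_le _ _).trans_eq List.length_attach)

/-- The unordered triples present together in a recursive call whose pivot is
one of them. -/
def pivotTriples (h : V → V → Bool) : List V → List (Finset V)
  | [] => []
  | x :: xs =>
      (xs.product xs).map (fun p => ({x, p.1, p.2} : Finset V)) ++
      (pivotTriples h (xs.filter (fun y => h y x)) ++
        pivotTriples h (xs.filter (fun y => !(h y x))))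
  termination_by l => l.length
  decreasing_by
    · simp only [List.length_cons, List.length_unattach]; exact Nat.lt_succ_of_le ((List.length_filter_le _ _).trans_eq List.length_attach)
    · simp only [List.length_cons, List.length_unattach]; exact Nat.lt_succ_of_le ((List.length_filter_le _ _).trans_eq List.length_attach)

/-- Expectation of `f` of the input list over a uniformly random ordering of
`V` (equivalently, over the random bits of QuickSort's pivot choices). -/
noncomputable def qsExp [Fintype V] (f : List V → ℝ) : ℝ :=
  (((Finset.univ : Finset V).toList.permutations.map f).sum) /
    (Nat.factorial (Fintype.card V))

/-- p_{uv}: the probability that the pair {u,v} is compared directly. -/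
noncomputable def pPair [Fintype V] (h : V → V → Bool) (u v : V) : ℝ :=
  qsExp (fun l => if ({u, v} : Finset V) ∈ directPairs h l then 1 else 0)

/-- p_{uvw}: the probability that u, v, w are in the same recursive call when
one of them is first chosen as pivot. -/
noncomputable def pTriple [Fintype V] (h : V → V → Bool) (u v w : V) : ℝ :=
  qsExp (fun l => if ({u, v, w} : Finset V) ∈ pivotTriples h l then 1 else 0)

/-- The {0,1}-valued preference function as a real number. -/
def hr (h : V → V → Bool) (a b : V) : ℝ := if h a b then 1 else 0

/-- Indicator that `u` is ranked before `v` in the output list. -/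
def rankBefore (l : List V) (u v : V) : ℝ := if l.idxOf u < l.idxOf v then 1 else 0

/-!
Call a triple `(a, x, b)` cyclic if `a → x → b → a` in the tournament `h` (`h u v`: `u` is
preferred to `v`). QuickSort places `a` before `b` although `h b a` exactly when some pivot `x`
sends `a` left and `b` right, i.e. when the cyclic triple `(a, x, b)` is still inside one
recursive call at the moment its middle vertex `x` is chosen as pivot. So the number of
disagreements of the output is the number of cyclic triples split at their middle vertex.

Swapping two vertices of a triangle in the input order turns "`x` is the pivot of the triangle"
into "`b` is the pivot", so over a uniformly random input order the three rotations of a cyclic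
triple are split equally often. At least one rotation `(a, x, b)` has its edge `b → a` misranked
by a given ranking `σ`; charging all three rotations to that one costs a factor `3`. Finally, for
a fixed input order the pair `(b, a)` determines the pivot `x` that separates it, so distinct
charged triples give distinct misranked pairs of `σ`.
-/

open Finset

set_option linter.unusedSectionVars false

theorem filter_map_swap {g : V → Bool} {a b : V} (hab : g a = g b) (xs : List V) :
    (xs.map (Equiv.swap a b)).filter g = (xs.filter g).map (Equiv.swap a b) := by
  rw [List.filter_map]
  congr 1
  refine List.filter_congr fun y _ => ?_
  simp only [Function.comp, Equiv.swap_apply_def]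
  split_ifs <;> simp_all

theorem sum_map_countP_eq_card_filter_product {L R : List V} (hL : L.Nodup) (hR : R.Nodup)
    (p : V → V → Bool) :
    (L.map fun a => R.countP (p a)).sum = #{q ∈ L.toFinset ×ˢ R.toFinset | p q.1 q.2} := by
  rw [card_filter, sum_product, ← List.sum_toFinset _ hL]
  refine sum_congr rfl fun a _ => ?_
  rw [← card_filter, List.countP_eq_length_filter, ← List.toFinset_card_of_nodup (hR.filter _),
    List.toFinset_filter]

theorem sum_filter_le_three_mul_of_rotate {β : Type*} [Fintype β] (ρ : β ≃ β) {C B : β → Prop}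
    [DecidablePred C] [DecidablePred B] (f : β → ℕ) (hC : ∀ τ, C τ → C (ρ τ))
    (hf : ∀ τ, C τ → f τ ≤ f (ρ τ)) (hB : ∀ τ, C τ → B τ ∨ B (ρ τ) ∨ B (ρ (ρ τ))) :
    ∑ τ with C τ, f τ ≤ 3 * ∑ τ with C τ ∧ B τ, f τ := by
  set g : β → ℕ := fun τ => if C τ ∧ B τ then f τ else 0
  have hle : ∀ τ, (if C τ then f τ else 0) ≤ g τ + g (ρ τ) + g (ρ (ρ τ)) := by
    intro τ
    by_cases hτ : C τ
    · have := hf τ hτ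
      have := hf _ (hC τ hτ)
      rcases hB τ hτ with hb | hb | hb <;> simp [g, hτ, hC τ hτ, hC _ (hC τ hτ), hb] <;> omega
    · simp [hτ]
  calc ∑ τ with C τ, f τ = ∑ τ, if C τ then f τ else 0 := sum_filter _ _
    _ ≤ ∑ τ, (g τ + g (ρ τ) + g (ρ (ρ τ))) := sum_le_sum fun τ _ => hle τ
    _ = 3 * ∑ τ, g τ := by
      rw [sum_add_distrib, sum_add_distrib, Equiv.sum_comp ρ g,
        Equiv.sum_comp ρ (fun τ => g (ρ τ)), Equiv.sum_comp ρ g]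
      ring
    _ = 3 * ∑ τ with C τ ∧ B τ, f τ := by rw [sum_filter]

theorem qsort_induction (h : V → V → Bool) {motive : List V → Prop} (nil : motive [])
    (cons : ∀ x xs, motive (xs.filter fun y => h y x) → motive (xs.filter fun y => !h y x) →
      motive (x :: xs)) (l : List V) : motive l := by
  induction l using qsort.induct h with
  | case1 => exact nil
  | case2 x xs ih1 ih2 =>
    -- `qsort.induct` states the recursive calls on `attach`ed lists
    simp only [List.unattach_filter, List.unattach_attach] at ih1 ih2
    exact cons x xs ih1 ih2

theorem qsort_cons (h : V → V → Bool) (x : V) (xs : List V) :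
    qsort h (x :: xs) =
      qsort h (xs.filter fun y => h y x) ++ x :: qsort h (xs.filter fun y => !h y x) := by
  rw [qsort]

theorem qsort_perm (h : V → V → Bool) (l : List V) : (qsort h l).Perm l := by
  induction l using qsort_induction h with
  | nil => simp [qsort]
  | cons x xs ih1 ih2 =>
    rw [qsort_cons]
    exact ((ih1.append (ih2.cons x)).trans List.perm_middle).trans
      ((List.filter_append_perm _ xs).cons x)

def disagreements (h : V → V → Bool) : List V → ℕ
  | [] => 0
  | a :: l => l.countP (fun b => h b a) + disagreements h l

theorem disagreements_append (h : V → V → Bool) (A B : List V) :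
    disagreements h (A ++ B) = disagreements h A + disagreements h B +
      (A.map fun a => B.countP fun b => h b a).sum := by
  induction A with
  | nil => simp [disagreements]
  | cons a A ih => simp [disagreements, ih, List.countP_append]; ring

def misranked [Fintype V] {α : Type*} [LinearOrder α] (h : V → V → Bool) (r : V → α) :
    Finset (V × V) :=
  {p | p.1 ≠ p.2 ∧ h p.1 p.2 ∧ r p.2 < r p.1}

theorem disagreements_eq_card [Fintype V] {h : V → V → Bool} {m : List V} (hm : m.Nodup) :
    disagreements h m = #{p ∈ misranked h m.idxOf | p.1 ∈ m} := by
  induction m with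
  | nil => simp [disagreements]
  | cons x m ih =>
    obtain ⟨hx, hm⟩ := List.nodup_cons.1 hm
    have hxm : m.idxOf x = m.length := List.idxOf_eq_length_iff.2 hx
    have hsplit : {p ∈ misranked h (x :: m).idxOf | p.1 ∈ x :: m} =
        ({a ∈ m.toFinset | h a x}).image (·, x) ∪ {p ∈ misranked h m.idxOf | p.1 ∈ m} := by
      ext ⟨u, v⟩
      have hum : u ∈ m → m.idxOf u < m.length := List.idxOf_lt_length_iff.2
      simp only [misranked, List.idxOf_cons, mem_filter, mem_univ, true_and, mem_union, mem_image,
        List.mem_toFinset, Prod.mk.injEq, List.mem_cons]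
      by_cases hux : u = x <;> by_cases hvx : v = x <;> simp_all <;> grind
    have hdisj : Disjoint (({a ∈ m.toFinset | h a x}).image (·, x))
        {p ∈ misranked h m.idxOf | p.1 ∈ m} := by
      rw [disjoint_left]
      intro _ hp hp'
      obtain ⟨a, -, rfl⟩ := mem_image.1 hp
      simp only [misranked, mem_filter, mem_univ, true_and] at hp'
      obtain ⟨⟨-, -, hlt⟩, hu⟩ := hp'
      have := List.idxOf_lt_length_iff.2 hu
      omega
    rw [hsplit, card_union_of_disjoint hdisj,
      card_image_of_injective _ (fun _ _ e => (Prod.mk.inj e).1), ← ih hm, ← List.toFinset_filter,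
      List.toFinset_card_of_nodup (hm.filter _), disagreements, List.countP_eq_length_filter]

theorem disagreements_qsort_cons {h : V → V → Bool} (htour : ∀ a b, a ≠ b → h a b = !h b a)
    {x : V} {xs : List V} (hx : x ∉ xs) :
    disagreements h (qsort h (x :: xs)) =
      disagreements h (qsort h (xs.filter fun y => h y x)) +
        disagreements h (qsort h (xs.filter fun y => !h y x)) +
          ((xs.filter fun y => h y x).map
            fun a => (xs.filter fun y => !h y x).countP fun b => h b a).sum := by
  set L := xs.filter fun y => h y x
  set R := xs.filter fun y => !h y x
  have hxL : ∀ a ∈ L, h x a = false := by grind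
  have hRx : ∀ b ∈ R, h b x = false := by grind
  rw [qsort_cons, disagreements_append, disagreements, (qsort_perm h R).countP_eq,
    List.countP_eq_zero.2 (by simpa using hRx), ← ((qsort_perm h L).map _).sum_eq,
    List.map_congr_left fun a ha => by
      rw [List.countP_cons, (qsort_perm h R).countP_eq, hxL a ((qsort_perm h L).subset ha)]]
  simp only [Bool.false_eq_true, ↓reduceIte, add_zero, zero_add]
  rfl

/-- Some recursive call of `qsort h` on `l` contains all of `s` and has pivot `w`. -/
inductive PivotOn (h : V → V → Bool) (s : Finset V) (w : V) : List V → Prop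
  | head {xs : List V} : w ∈ s → (∀ v ∈ s, v ∈ w :: xs) → PivotOn h s w (w :: xs)
  | left {x : V} {xs : List V} :
      PivotOn h s w (xs.filter (fun y => h y x)) → PivotOn h s w (x :: xs)
  | right {x : V} {xs : List V} :
      PivotOn h s w (xs.filter (fun y => !h y x)) → PivotOn h s w (x :: xs)

namespace PivotOn

variable {h : V → V → Bool} {s : Finset V} {w : V} {l : List V}

theorem pivot_mem (hP : PivotOn h s w l) : w ∈ s := by
  induction hP <;> assumption

theorem mem_of_mem (hP : PivotOn h s w l) {v : V} (hv : v ∈ s) : v ∈ l := by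
  induction hP with
  | head _ hs => exact hs v hv
  | left _ ih => exact List.mem_cons_of_mem _ (List.mem_of_mem_filter ih)
  | right _ ih => exact List.mem_cons_of_mem _ (List.mem_of_mem_filter ih)

theorem cons_iff {x : V} {xs : List V} :
    PivotOn h s w (x :: xs) ↔ (w = x ∧ w ∈ s ∧ ∀ v ∈ s, v ∈ x :: xs) ∨
      PivotOn h s w (xs.filter (fun y => h y x)) ∨
        PivotOn h s w (xs.filter (fun y => !h y x)) := by
  constructor
  · rintro (⟨hw, hs⟩ | hP | hP)
    exacts [Or.inl ⟨rfl, hw, hs⟩, Or.inr (Or.inl hP), Or.inr (Or.inr hP)]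
  · rintro (⟨rfl, hw, hs⟩ | hP | hP)
    exacts [head hw hs, left hP, right hP]

theorem eq_of_separates {s' : Finset V} {w' a b : V} (hP : PivotOn h s w l)
    (hP' : PivotOn h s' w' l) (ha : a ∈ s) (hb : b ∈ s) (ha' : a ∈ s') (hb' : b ∈ s')
    (hsep : h a w ≠ h b w) (hsep' : h a w' ≠ h b w') : w = w' := by
  induction hP with
  | head => cases hP' with
    | head => rfl
    | left hP' | right hP' =>
      have ha := hP'.mem_of_mem ha'
      have hb := hP'.mem_of_mem hb'
      simp only [List.mem_filter] at ha hb
      grind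
  | left hP ih | right hP ih =>
    have ha := hP.mem_of_mem ha
    have hb := hP.mem_of_mem hb
    cases hP' with
    | head => simp only [List.mem_filter] at ha hb; grind
    | left hP' | right hP' =>
      first
      | exact ih hP'
      | have := hP'.mem_of_mem ha'; simp only [List.mem_filter] at ha this; grind

theorem map_swap {a b : V} (hl : l.Nodup) (hP : PivotOn h s a l) (hb : b ∈ s) :
    PivotOn h s b (l.map (Equiv.swap a b)) := by
  have hswap : ∀ v ∈ s, Equiv.swap a b v ∈ s := fun v hv => by
    rw [Equiv.swap_apply_def]; split_ifs <;> first | assumption | exact hP.pivot_mem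
  induction hP with
  | head _ hs =>
    rw [List.map_cons, Equiv.swap_apply_left]
    refine head hb fun v hv => ?_
    simpa using List.mem_map_of_mem (f := Equiv.swap a b) (hs _ (hswap v hv))
  | @left x xs hP ih | @right x xs hP ih =>
    -- the pivot `x` lies outside `s`, and it sends `a` and `b` to the same side
    have hx : x ∉ s := fun hx =>
      (List.nodup_cons.1 hl).1 (List.mem_of_mem_filter (hP.mem_of_mem hx))
    have haside := hP.mem_of_mem hP.pivot_mem
    have hbside := hP.mem_of_mem hb
    simp only [List.mem_filter] at haside hbside
    rw [List.map_cons, Equiv.swap_apply_of_ne_of_ne (by rintro rfl; exact hx hP.pivot_mem)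
      (by rintro rfl; exact hx hb)]
    have ih := ih (hl.sublist (List.filter_sublist.cons x))
    rw [← filter_map_swap (by grind)] at ih
    first | exact left ih | exact right ih

end PivotOn

def IsCyclicTriple (h : V → V → Bool) : V × V × V → Prop
  | (a, x, b) => a ≠ x ∧ x ≠ b ∧ a ≠ b ∧ h a x ∧ h x b ∧ h b a

theorem IsCyclicTriple.separates {h : V → V → Bool} (htour : ∀ a b, a ≠ b → h a b = !h b a)
    {a x b : V} (hc : IsCyclicTriple h (a, x, b)) : h a x ≠ h b x := by
  obtain ⟨-, hxb, -, hax, hxb', -⟩ := hc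
  rw [hax, htour b x (Ne.symm hxb), hxb']
  decide

theorem isCyclicTriple_and_mem_iff {h : V → V → Bool} (htour : ∀ a b, a ≠ b → h a b = !h b a)
    {a x b : V} {xs : List V} (hx : x ∉ xs) :
    (IsCyclicTriple h (a, x, b) ∧ a ∈ x :: xs ∧ b ∈ x :: xs) ↔
      a ∈ xs.filter (fun y => h y x) ∧ b ∈ xs.filter (fun y => !h y x) ∧ h b a := by
  simp only [IsCyclicTriple, List.mem_cons, List.mem_filter]
  grind

def PivotsMiddle (h : V → V → Bool) (l : List V) : V × V × V → Prop
  | (a, x, b) => PivotOn h {a, x, b} x l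

section CyclicSplits

variable [Fintype V] {h : V → V → Bool}

open scoped Classical in
noncomputable def cyclicSplits (h : V → V → Bool) (l : List V) : Finset (V × V × V) :=
  {τ | IsCyclicTriple h τ ∧ PivotsMiddle h l τ}

theorem mem_of_mem_cyclicSplits {l : List V} {a x b : V} (hτ : (a, x, b) ∈ cyclicSplits h l) :
    a ∈ l ∧ x ∈ l ∧ b ∈ l := by
  classical
  obtain ⟨-, hP⟩ := (mem_filter.1 hτ).2
  exact ⟨hP.mem_of_mem (by simp), hP.mem_of_mem (by simp), hP.mem_of_mem (by simp)⟩

theorem cyclicSplits_cons (htour : ∀ a b, a ≠ b → h a b = !h b a) {x : V} {xs : List V}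
    (hx : x ∉ xs) :
    cyclicSplits h (x :: xs) =
      {q ∈ (xs.filter fun y => h y x).toFinset ×ˢ (xs.filter fun y => !h y x).toFinset |
          h q.2 q.1}.image (fun q => (q.1, x, q.2)) ∪
        (cyclicSplits h (xs.filter fun y => h y x) ∪
          cyclicSplits h (xs.filter fun y => !h y x)) := by
  classical
  ext ⟨a, y, b⟩
  simp only [cyclicSplits, mem_filter, mem_univ, true_and, mem_union, mem_image,
    mem_product, List.mem_toFinset, Prod.exists, Prod.mk.injEq]
  simp only [PivotsMiddle, PivotOn.cons_iff]
  constructor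
  · rintro ⟨hc, ⟨rfl, -, hs⟩ | hP | hP⟩
    · obtain ⟨ha, hb, hba⟩ :=
        (isCyclicTriple_and_mem_iff htour hx).1 ⟨hc, hs a (by simp), hs b (by simp)⟩
      exact Or.inl ⟨a, b, ⟨⟨ha, hb⟩, hba⟩, rfl, rfl, rfl⟩
    · exact Or.inr (Or.inl ⟨hc, hP⟩)
    · exact Or.inr (Or.inr ⟨hc, hP⟩)
  · rintro (⟨a, b, ⟨⟨ha, hb⟩, hba⟩, rfl, rfl, rfl⟩ | ⟨hc, hP⟩ | ⟨hc, hP⟩)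
    · obtain ⟨hc, ha, hb⟩ := (isCyclicTriple_and_mem_iff htour hx).2 ⟨ha, hb, hba⟩
      refine ⟨hc, Or.inl ⟨rfl, by simp, ?_⟩⟩
      simp only [mem_insert, mem_singleton]
      rintro v (rfl | rfl | rfl) <;> simp_all
    · exact ⟨hc, Or.inr (Or.inl hP)⟩
    · exact ⟨hc, Or.inr (Or.inr hP)⟩

theorem card_cyclicSplits_cons (htour : ∀ a b, a ≠ b → h a b = !h b a) {x : V} {xs : List V}
    (hl : (x :: xs).Nodup) :
    #(cyclicSplits h (x :: xs)) =
      #(cyclicSplits h (xs.filter fun y => h y x)) +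
        #(cyclicSplits h (xs.filter fun y => !h y x)) +
          ((xs.filter fun y => h y x).map
            fun a => (xs.filter fun y => !h y x).countP fun b => h b a).sum := by
  obtain ⟨hx, hxs⟩ := List.nodup_cons.1 hl
  have hsides : Disjoint (cyclicSplits h (xs.filter fun y => h y x))
      (cyclicSplits h (xs.filter fun y => !h y x)) := by
    rw [disjoint_left]
    rintro ⟨a, y, b⟩ hL hR
    have haL := (mem_of_mem_cyclicSplits hL).1
    have haR := (mem_of_mem_cyclicSplits hR).1
    simp only [List.mem_filter] at haL haR
    grind
  have hnew : Disjoint ({q ∈ (xs.filter fun y => h y x).toFinset ×ˢ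
        (xs.filter fun y => !h y x).toFinset | h q.2 q.1}.image (fun q => (q.1, x, q.2)))
      (cyclicSplits h (xs.filter fun y => h y x) ∪
        cyclicSplits h (xs.filter fun y => !h y x)) := by
    rw [disjoint_left]
    rintro _ hq hτ
    obtain ⟨q, -, rfl⟩ := mem_image.1 hq
    rcases mem_union.1 hτ with hτ | hτ <;>
      exact hx (List.mem_of_mem_filter (mem_of_mem_cyclicSplits hτ).2.1)
  rw [cyclicSplits_cons htour hx, card_union_of_disjoint hnew, card_union_of_disjoint hsides,
    card_image_of_injective _ fun q q' e =>
      Prod.ext (Prod.mk.inj e).1 (Prod.mk.inj (Prod.mk.inj e).2).2,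
    sum_map_countP_eq_card_filter_product (hxs.filter _) (hxs.filter _)]
  ring

theorem disagreements_qsort (htour : ∀ a b, a ≠ b → h a b = !h b a) {l : List V}
    (hl : l.Nodup) : disagreements h (qsort h l) = #(cyclicSplits h l) := by
  classical
  induction l using qsort_induction h with
  | nil =>
    rw [qsort, disagreements, eq_comm, card_eq_zero, cyclicSplits, filter_eq_empty_iff]
    rintro ⟨a, x, b⟩ - ⟨-, hP⟩
    cases hP
  | cons x xs ihL ihR =>
    have hxs := (List.nodup_cons.1 hl).2
    rw [disagreements_qsort_cons htour (List.nodup_cons.1 hl).1, card_cyclicSplits_cons htour hl,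
      ihL (hxs.filter _), ihR (hxs.filter _)]

theorem card_filter_cyclicSplits_le {α : Type*} [LinearOrder α]
    (htour : ∀ a b, a ≠ b → h a b = !h b a) (r : V → α) (l : List V) :
    #{τ ∈ cyclicSplits h l | r τ.1 < r τ.2.2} ≤ #(misranked h r) := by
  classical
  -- `(a, x, b) ↦ (b, a)` is injective: the pair determines the pivot `x` that separates it
  refine card_le_card_of_injOn (fun τ => (τ.2.2, τ.1)) ?_ ?_
  · rintro ⟨a, x, b⟩ hτ
    simp only [coe_filter, cyclicSplits, mem_filter, mem_univ, true_and] at hτ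
    simp only [misranked, coe_filter, mem_univ, true_and, Set.mem_ofPred_eq]
    obtain ⟨⟨⟨-, -, hab, -, -, hba⟩, -⟩, hlt⟩ := hτ
    exact ⟨Ne.symm hab, hba, hlt⟩
  · rintro ⟨a, x, b⟩ hτ ⟨a', x', b'⟩ hτ' he
    obtain ⟨rfl, rfl⟩ : b = b' ∧ a = a' := Prod.mk.inj he
    simp only [coe_filter, cyclicSplits, mem_filter, mem_univ, true_and,
      Set.mem_ofPred_eq] at hτ hτ'
    obtain ⟨⟨hc, hP⟩, -⟩ := hτ
    obtain ⟨⟨hc', hP'⟩, -⟩ := hτ'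
    rw [hP.eq_of_separates hP' (by simp) (by simp) (by simp) (by simp) (hc.separates htour)
      (hc'.separates htour)]

open scoped Classical in
theorem sum_card_filter_cyclicSplits (S : Finset (List V)) (P : V × V × V → Prop)
    [DecidablePred P] :
    ∑ m ∈ S, #{τ ∈ cyclicSplits h m | P τ} =
      ∑ τ with IsCyclicTriple h τ ∧ P τ, #{m ∈ S | PivotsMiddle h m τ} := by
  have hsplits : ∀ m, {τ ∈ cyclicSplits h m | P τ} =
      {τ ∈ ({τ | IsCyclicTriple h τ ∧ P τ} : Finset _) | PivotsMiddle h m τ} := by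
    intro m
    ext τ
    simp only [cyclicSplits, mem_filter, mem_univ, true_and]
    tauto
  simp only [hsplits]
  exact sum_card_bipartiteAbove_eq_sum_card_bipartiteBelow (fun m τ => PivotsMiddle h m τ)

end CyclicSplits

section Rankings

variable [Fintype V]

noncomputable def rankings : Finset (List V) :=
  (univ : Finset V).toList.permutations.toFinset

theorem mem_rankings {m : List V} : m ∈ rankings ↔ m.Nodup ∧ ∀ v, v ∈ m := by
  rw [rankings, List.mem_toFinset, List.mem_permutations]
  constructor
  · intro hm
    exact ⟨hm.nodup_iff.2 (nodup_toList _), fun v => hm.mem_iff.2 (mem_toList.2 (mem_univ v))⟩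
  · rintro ⟨hm, hv⟩
    exact (List.perm_ext_iff_of_nodup hm (nodup_toList _)).2 fun v => by simp [hv]

theorem card_rankings : #(rankings (V := V)) = (Fintype.card V).factorial := by
  rw [rankings, List.toFinset_card_of_nodup (List.nodup_permutations _ (nodup_toList _)),
    List.length_permutations, length_toList, card_univ]

theorem qsExp_eq_sum (f : List V → ℝ) :
    qsExp f = (∑ m ∈ rankings, f m) / (Fintype.card V).factorial := by
  rw [qsExp, rankings, List.sum_toFinset _ (List.nodup_permutations _ (nodup_toList _))]

theorem map_mem_rankings (π : Equiv.Perm V) {m : List V} (hm : m ∈ rankings) :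
    m.map π ∈ rankings := by
  rw [mem_rankings] at hm ⊢
  exact ⟨hm.1.map π.injective, fun v => List.mem_map.2 ⟨π.symm v, hm.2 _, by simp⟩⟩

theorem qsort_mem_rankings (h : V → V → Bool) {m : List V} (hm : m ∈ rankings) :
    qsort h m ∈ rankings := by
  rw [mem_rankings] at hm ⊢
  exact ⟨(qsort_perm h m).nodup_iff.2 hm.1, fun v => (qsort_perm h m).mem_iff.2 (hm.2 v)⟩

open scoped Classical in
theorem card_pivotsMiddle_le_rotate (h : V → V → Bool) (a x b : V) :
    #{m ∈ rankings | PivotsMiddle h m (a, x, b)} ≤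
      #{m ∈ rankings | PivotsMiddle h m (x, b, a)} := by
  refine card_le_card_of_injOn (List.map (Equiv.swap x b)) (fun m hm => ?_)
    ((List.map_injective_iff.2 (Equiv.injective _)).injOn)
  rw [mem_coe, mem_filter] at hm ⊢
  refine ⟨map_mem_rankings _ hm.1, ?_⟩
  have hs : ({x, b, a} : Finset V) = {a, x, b} := by ext; simp; tauto
  simp only [PivotsMiddle, hs] at hm ⊢
  exact hm.2.map_swap (mem_rankings.1 hm.1).1 (by simp)

open scoped Classical in
theorem sum_disagreements_qsort_le {α : Type*} [LinearOrder α] {h : V → V → Bool}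
    (htour : ∀ a b, a ≠ b → h a b = !h b a) {r : V → α} (hr : Function.Injective r) :
    ∑ m ∈ rankings, disagreements h (qsort h m) ≤
      3 * (#(rankings (V := V)) * #(misranked h r)) := by
  -- `ρ (a, x, b) = (x, b, a)`
  let ρ : V × V × V ≃ V × V × V := (Equiv.prodComm V (V × V)).trans (Equiv.prodAssoc V V V)
  calc ∑ m ∈ rankings, disagreements h (qsort h m)
      = ∑ m ∈ rankings, #(cyclicSplits h m) :=
        sum_congr rfl fun m hm => disagreements_qsort htour (mem_rankings.1 hm).1
    _ = ∑ τ with IsCyclicTriple h τ, #{m ∈ rankings | PivotsMiddle h m τ} := by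
        simpa using sum_card_filter_cyclicSplits (h := h) rankings (fun _ => True)
    _ ≤ 3 * ∑ τ with IsCyclicTriple h τ ∧ r τ.1 < r τ.2.2,
          #{m ∈ rankings | PivotsMiddle h m τ} := by
        refine sum_filter_le_three_mul_of_rotate ρ _ ?_ ?_ ?_
        · rintro ⟨a, x, b⟩ ⟨hax, hxb, hab, hax', hxb', hba⟩
          exact ⟨hxb, Ne.symm hab, Ne.symm hax, hxb', hba, hax'⟩
        · rintro ⟨a, x, b⟩ -
          exact card_pivotsMiddle_le_rotate h a x b
        · rintro ⟨a, x, b⟩ ⟨-, -, hab, -⟩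
          show r a < r b ∨ r x < r a ∨ r b < r x
          by_contra! hle
          exact hab (hr (le_antisymm (hle.2.1.trans hle.2.2) hle.1))
    _ = 3 * ∑ m ∈ rankings, #{τ ∈ cyclicSplits h m | r τ.1 < r τ.2.2} := by
        rw [sum_card_filter_cyclicSplits rankings fun τ => r τ.1 < r τ.2.2]
    _ ≤ 3 * ∑ m ∈ rankings, #(misranked h r) := by
        gcongr with m
        exact card_filter_cyclicSplits_le htour r m
    _ = 3 * (#(rankings (V := V)) * #(misranked h r)) := by rw [sum_const, smul_eq_mul]

theorem disagreements_eq_card_misranked {h : V → V → Bool} {m : List V} (hm : m ∈ rankings) :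
    disagreements h m = #(misranked h m.idxOf) := by
  rw [disagreements_eq_card (mem_rankings.1 hm).1,
    filter_true_of_mem fun p _ => (mem_rankings.1 hm).2 p.1]

end Rankings

theorem sum_hr_mul_ite_lt_eq_card_misranked [Fintype V] {α : Type*} [LinearOrder α]
    (h : V → V → Bool) (r : V → α) :
    ∑ p ∈ (univ : Finset (V × V)).filter (fun p => p.1 ≠ p.2),
      hr h p.1 p.2 * (if r p.2 < r p.1 then (1 : ℝ) else 0) = #(misranked h r) := by
  simp only [hr, ite_zero_mul_ite_zero, mul_one]
  rw [sum_boole, filter_filter]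
  rfl

theorem quicksort_disagreement_bound_general [Fintype V] {n : ℕ}
    (h : V → V → Bool) (htour : ∀ a b : V, a ≠ b → h a b = !h b a)
    (σopt : V ≃ Fin n) :
    qsExp (fun l =>
        ((n.choose 2 : ℝ))⁻¹ *
          ∑ p ∈ (Finset.univ : Finset (V × V)).filter (fun p => p.1 ≠ p.2),
            hr h p.1 p.2 * rankBefore (qsort h l) p.2 p.1)
      ≤ 3 * (((n.choose 2 : ℝ))⁻¹ *
          ∑ p ∈ (Finset.univ : Finset (V × V)).filter (fun p => p.1 ≠ p.2),
            hr h p.1 p.2 * (if (σopt p.2 : ℕ) < (σopt p.1 : ℕ) then (1 : ℝ) else 0)) := by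
  set C : ℝ := ((n.choose 2 : ℝ))⁻¹
  have hsorted : ∀ m ∈ rankings, ∑ p ∈ (univ : Finset (V × V)).filter (fun p => p.1 ≠ p.2),
      hr h p.1 p.2 * rankBefore (qsort h m) p.2 p.1 = disagreements h (qsort h m) :=
    fun m hm => by
      rw [disagreements_eq_card_misranked (qsort_mem_rankings h hm),
        ← sum_hr_mul_ite_lt_eq_card_misranked]
      rfl
  have hcount : (∑ m ∈ rankings, disagreements h (qsort h m) : ℝ) ≤
      3 * ((Fintype.card V).factorial * #(misranked h fun v => (σopt v : ℕ))) := by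
    rw [← card_rankings]
    exact_mod_cast sum_disagreements_qsort_le htour (Fin.val_injective.comp σopt.injective)
  rw [qsExp_eq_sum, sum_congr rfl fun m hm => by rw [hsorted m hm], ← mul_sum,
    sum_hr_mul_ite_lt_eq_card_misranked h (fun v => (σopt v : ℕ)), div_le_iff₀ (by positivity)]
  calc C * ∑ m ∈ rankings, (disagreements h (qsort h m) : ℝ)
      ≤ C * (3 * ((Fintype.card V).factorial * #(misranked h fun v => (σopt v : ℕ)))) := by
        gcongr
    _ = _ := by ring

/-- the expected pairwise disagreement of QuickSort's output with
the preference function h is at most three times the minimal disagreement of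
any ranking with h. -/
theorem quicksort_disagreement_bound [Fintype V] {n : ℕ}
    (hn : Fintype.card V = n)
    (h : V → V → Bool) (htour : ∀ a b : V, a ≠ b → h a b = !h b a)
    (σopt : V ≃ Fin n)
    (hopt : ∀ σ : V ≃ Fin n,
      ((n.choose 2 : ℝ))⁻¹ *
          ∑ p ∈ (Finset.univ : Finset (V × V)).filter (fun p => p.1 ≠ p.2),
            hr h p.1 p.2 * (if (σopt p.2 : ℕ) < (σopt p.1 : ℕ) then (1 : ℝ) else 0)
        ≤ ((n.choose 2 : ℝ))⁻¹ *
          ∑ p ∈ (Finset.univ : Finset (V × V)).filter (fun p => p.1 ≠ p.2),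
            hr h p.1 p.2 * (if (σ p.2 : ℕ) < (σ p.1 : ℕ) then (1 : ℝ) else 0)) :
    qsExp (fun l =>
        ((n.choose 2 : ℝ))⁻¹ *
          ∑ p ∈ (Finset.univ : Finset (V × V)).filter (fun p => p.1 ≠ p.2),
            hr h p.1 p.2 * rankBefore (qsort h l) p.2 p.1)
      ≤ 3 * (((n.choose 2 : ℝ))⁻¹ *
          ∑ p ∈ (Finset.univ : Finset (V × V)).filter (fun p => p.1 ≠ p.2),
            hr h p.1 p.2 * (if (σopt p.2 : ℕ) < (σopt p.1 : ℕ) then (1 : ℝ) else 0)) :=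
  quicksort_disagreement_bound_general h htour σopt
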